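/- If Γ is a constant sequence of formulae and A is a constant formula, then the sequent Γ ⊢ A is derivable in the system S. -/

import Mathlib

/-- Formulae of the system `S`: built from propositional letters and the constant `I`
(`unit`) with the binary connectives `⊗` (`tens`) and `→` (`imp`). -/
inductive Fml : Type
  | atom : ℕ → Fml
  | unit : Fml
  | tens : Fml → Fml → Fml
  | imp : Fml → Fml → Fml

/-- Derivability in the system `S`.  Sequents are `Γ ⊢ A` with `Γ` a finite list of
formulae.  Axioms: `A ⊢ A` and `⊢ I`; structural rules: weakening, interchange and cut;
operational rules: `⊗⊢`, `⊢⊗`, `→⊢` and `⊢→`. -/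
inductive SDeriv : List Fml → Fml → Prop
  | ax (A : Fml) : SDeriv [A] A
  | axI : SDeriv [] Fml.unit
  | weak {Γ A} : SDeriv Γ A → SDeriv (Fml.unit :: Γ) A
  | exch {Γ Δ : List Fml} {A B C} :
      SDeriv (Γ ++ A :: B :: Δ) C → SDeriv (Γ ++ B :: A :: Δ) C
  | cut {Γ Δ Θ : List Fml} {A B} :
      SDeriv Γ A → SDeriv (Δ ++ A :: Θ) B → SDeriv (Δ ++ Γ ++ Θ) B
  | tensL {Γ Δ : List Fml} {A B C} :
      SDeriv (Γ ++ A :: B :: Δ) C → SDeriv (Γ ++ (A.tens B) :: Δ) C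
  | tensR {Γ Δ : List Fml} {A B} :
      SDeriv Γ A → SDeriv Δ B → SDeriv (Γ ++ Δ) (A.tens B)
  | impL {Γ Δ : List Fml} {A B C} :
      SDeriv Γ A → SDeriv (B :: Δ) C → SDeriv (Γ ++ (A.imp B) :: Δ) C
  | impR {Γ : List Fml} {A B} :
      SDeriv (A :: Γ) B → SDeriv Γ (A.imp B)

/-- A formula is constant when it contains no propositional letters. -/
def Fml.isConst : Fml → Prop
  | .atom _ => False
  | .unit => True
  | .tens A B => A.isConst ∧ B.isConst
  | .imp A B => A.isConst ∧ B.isConst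

/-!
By induction on a constant formula `A`, both `⊢ A` and `A ⊢ I` are derivable; the two claims
have to be proved together, since `A → B` is introduced from `A ⊢ I` and `⊢ B`, and eliminated
using `⊢ A` and `B ⊢ I`. A hypothesis `B` with `B ⊢ I` can always be added to a sequent: weaken
by `I`, then cut `I` against `B ⊢ I`.
-/

namespace SDeriv

variable {Γ Δ : List Fml} {A B : Fml}

theorem cut_head (hA : SDeriv Γ A) (h : SDeriv (A :: Δ) B) : SDeriv (Γ ++ Δ) B := by
  simpa using cut (Δ := []) hA h

theorem cons_of_unit (hB : SDeriv [B] Fml.unit) (h : SDeriv Γ A) : SDeriv (B :: Γ) A :=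
  cut_head hB h.weak

theorem nil_and_unit_of_isConst (hconst : A.isConst) : SDeriv [] A ∧ SDeriv [A] Fml.unit := by
  induction A with
  | atom _ => exact hconst.elim
  | unit => exact ⟨axI, ax _⟩
  | tens A B ihA ihB =>
    obtain ⟨hA, hAI⟩ := ihA hconst.1
    obtain ⟨hB, hBI⟩ := ihB hconst.2
    refine ⟨tensR hA hB, ?_⟩
    simpa using tensL (Γ := []) (Δ := []) (cons_of_unit hAI hBI)
  | imp A B ihA ihB =>
    obtain ⟨hA, hAI⟩ := ihA hconst.1
    obtain ⟨hB, hBI⟩ := ihB hconst.2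
    exact ⟨impR (cons_of_unit hAI hB), by simpa using impL (Γ := []) hA hBI⟩

end SDeriv

/-- If `Γ` is a constant sequence and `A` a constant formula, then `Γ ⊢ A` is
derivable in `S`. -/
theorem constant_sequent_derivable (Γ : List Fml) (A : Fml)
    (hΓ : ∀ B ∈ Γ, B.isConst) (hA : A.isConst) : SDeriv Γ A := by
  induction Γ with
  | nil => exact (SDeriv.nil_and_unit_of_isConst hA).1
  | cons B Γ ih =>
    rw [List.forall_mem_cons] at hΓ
    exact SDeriv.cons_of_unit (SDeriv.nil_and_unit_of_isConst hΓ.1).2 (ih hΓ.2)
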